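/- arXiv:1707.05092 — 2 statements merged into one kernel-verified Lean document; each statement's English description precedes it below -/
import Mathlib

section
/- Let G be a smooth function on an open set O ⊆ ℝ^n \ {0} that is stable under positive dilations, and suppose G(r·x) = r^{-n/2} G(x) for all r > 0 and x ∈ O. Then for all x ∈ O, □(Q·G)(x) = Q(x)·(□G)(x), where Q and □ are the standard quadratic form and d'Alembertian of signature (p,q) with p+q = n. -/
open Real Finset ContDiff

noncomputable def eps (p : ℕ) {n : ℕ} (j : Fin n) : ℝ := if (j : ℕ) < p then 1 else -1

noncomputable def Qb (p : ℕ) {n : ℕ} (x y : Fin n → ℝ) : ℝ := ∑ j, eps p j * x j * y j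

noncomputable def Qf (p : ℕ) {n : ℕ} (x : Fin n → ℝ) : ℝ := Qb p x x

noncomputable def pd {n : ℕ} (j : Fin n) (f : (Fin n → ℝ) → ℝ) : (Fin n → ℝ) → ℝ :=
  fun x => fderiv ℝ f x (Pi.single j 1)

noncomputable def dalembert (p : ℕ) {n : ℕ} (f : (Fin n → ℝ) → ℝ) : (Fin n → ℝ) → ℝ :=
  fun x => ∑ j, eps p j * pd j (pd j f) x

noncomputable def euler {n : ℕ} (f : (Fin n → ℝ) → ℝ) : (Fin n → ℝ) → ℝ :=
  fun x => ∑ j, x j * pd j f x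

lemma eps_sq (p : ℕ) {n : ℕ} (j : Fin n) : eps p j * eps p j = 1 := by
  unfold eps; split <;> norm_num

lemma hasFDerivAt_Qf (p : ℕ) {n : ℕ} (x : Fin n → ℝ) :
    HasFDerivAt (Qf p) (∑ j, (2 * eps p j * x j) •
      (ContinuousLinearMap.proj j : (Fin n → ℝ) →L[ℝ] ℝ)) x := by
  have h : ∀ j : Fin n, HasFDerivAt (fun y : Fin n → ℝ => eps p j * y j * y j)
      ((2 * eps p j * x j) • (ContinuousLinearMap.proj j : (Fin n → ℝ) →L[ℝ] ℝ)) x := by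
    intro j
    have hp : HasFDerivAt (fun y : Fin n → ℝ => y j)
        (ContinuousLinearMap.proj j : (Fin n → ℝ) →L[ℝ] ℝ) x :=
      hasFDerivAt_apply j x
    have := ((hp.const_mul (eps p j)).fun_mul hp)
    refine this.congr_fderiv ?_
    ext v
    simp [ContinuousLinearMap.proj]
    ring
  have := HasFDerivAt.fun_sum (fun j (_ : j ∈ Finset.univ) => h j)
  exact this

lemma pd_Qf (p : ℕ) {n : ℕ} (j : Fin n) (x : Fin n → ℝ) :
    pd j (Qf p) x = 2 * eps p j * x j := by
  rw [pd, (hasFDerivAt_Qf p x).fderiv]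
  simp [ContinuousLinearMap.proj, Pi.single_apply]

lemma contDiff_Qf (p : ℕ) {n : ℕ} : ContDiff ℝ (⊤ : ℕ∞) (Qf p (n := n)) := by
  have : ∀ j : Fin n, ContDiff ℝ (⊤ : ℕ∞) (fun y : Fin n → ℝ => eps p j * y j * y j) := by
    intro j
    exact (contDiff_const.mul (contDiff_apply ℝ ℝ j)).mul (contDiff_apply ℝ ℝ j)
  unfold Qf Qb
  exact ContDiff.sum fun j _ => this j

lemma pd_mul {n : ℕ} (j : Fin n) {f g : (Fin n → ℝ) → ℝ} {x : Fin n → ℝ}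
    (hf : DifferentiableAt ℝ f x) (hg : DifferentiableAt ℝ g x) :
    pd j (fun y => f y * g y) x = f x * pd j g x + g x * pd j f x := by
  simp [pd, fderiv_fun_mul hf hg]

lemma pd_add {n : ℕ} (j : Fin n) {f g : (Fin n → ℝ) → ℝ} {x : Fin n → ℝ}
    (hf : DifferentiableAt ℝ f x) (hg : DifferentiableAt ℝ g x) :
    pd j (fun y => f y + g y) x = pd j f x + pd j g x := by
  simp [pd, fderiv_fun_add hf hg]

lemma pd_proj {n : ℕ} (j : Fin n) (c : ℝ) (x : Fin n → ℝ) :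
    pd j (fun y : Fin n → ℝ => c * y j) x = c := by
  have hp : HasFDerivAt (fun y : Fin n → ℝ => c * y j)
      (c • (ContinuousLinearMap.proj j : (Fin n → ℝ) →L[ℝ] ℝ)) x :=
    (hasFDerivAt_apply j x).const_mul c
  rw [pd, hp.fderiv]
  simp [ContinuousLinearMap.proj]

/-- if `G` is homogeneous of degree `-n/2` on a conical open set,
then `□(Q·G) = Q·□G` there. -/
theorem box_Q_homog (p q n : ℕ) (hp : 1 ≤ p) (hq : 1 ≤ q) (hn : n = p + q)
    (O : Set (Fin n → ℝ)) (hO : IsOpen O) (hO0 : ∀ x ∈ O, x ≠ 0)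
    (hcone : ∀ r : ℝ, 0 < r → ∀ x ∈ O, r • x ∈ O)
    (G : (Fin n → ℝ) → ℝ) (hG : ContDiffOn ℝ (⊤ : ℕ∞) G O)
    (hhom : ∀ r : ℝ, 0 < r → ∀ x ∈ O, G (r • x) = r ^ (-(n : ℝ) / 2) * G x)
    (x : Fin n → ℝ) (hx : x ∈ O) :
    dalembert p (fun y => Qf p y * G y) x = Qf p x * dalembert p G x := by
  have hOx : O ∈ nhds x := hO.mem_nhds hx
  have hG' : ContDiffOn ℝ ∞ G O := hG.of_le (by simp)
  have hGd : ∀ y ∈ O, DifferentiableAt ℝ G y := fun y hy =>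
    (hG'.differentiableOn (by simp)).differentiableAt (hO.mem_nhds hy)
  have hpdGc : ∀ j : Fin n, ContDiffOn ℝ ∞ (pd j G) O := fun j =>
    ((hG.of_le (m := ∞) (by simp)).fderiv_of_isOpen hO (le_of_eq (by rfl))).clm_apply contDiffOn_const
  have hpdGd : ∀ j : Fin n, ∀ y ∈ O, DifferentiableAt ℝ (pd j G) y := fun j y hy =>
    ((hpdGc j).differentiableOn (by simp)).differentiableAt (hO.mem_nhds hy)
  have hQd : ∀ y : Fin n → ℝ, DifferentiableAt ℝ (Qf p (n := n)) y := fun y =>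
    ((contDiff_Qf p).differentiable (by simp)).differentiableAt
  -- Euler relation
  have heuler : (∑ j, x j * pd j G x) = (-(n : ℝ) / 2) * G x := by
    set c : ℝ := -(n : ℝ) / 2 with hc
    have hinner : HasDerivAt (fun r : ℝ => r • x) x 1 := by
      simpa using (hasDerivAt_id (1 : ℝ)).smul_const x
    have h1 : HasDerivAt (fun r : ℝ => G (r • x)) (fderiv ℝ G x x) 1 := by
      have hG1 : HasFDerivAt G (fderiv ℝ G x) ((1 : ℝ) • x) := by
        rw [one_smul]; exact (hGd x hx).hasFDerivAt
      exact hG1.comp_hasDerivAt (1 : ℝ) hinner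
    have h2 : HasDerivAt (fun r : ℝ => r ^ c * G x) (c * G x) 1 := by
      have := (Real.hasDerivAt_rpow_const (x := (1 : ℝ)) (p := c)
        (Or.inl one_ne_zero)).mul_const (G x)
      simpa using this
    have hev : (fun r : ℝ => G (r • x)) =ᶠ[nhds 1] (fun r : ℝ => r ^ c * G x) := by
      filter_upwards [isOpen_Ioi.mem_nhds (by norm_num : (1 : ℝ) ∈ Set.Ioi 0)] with r hr
      exact hhom r hr x hx
    have hkey : fderiv ℝ G x x = c * G x := h1.unique (h2.congr_of_eventuallyEq hev)
    have hxs : x = ∑ j, x j • (Pi.single j (1 : ℝ) : Fin n → ℝ) := by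
      funext i
      simp [Pi.single_apply, Finset.sum_apply, mul_ite]
    set L := fderiv ℝ G x with hL
    calc (∑ j, x j * pd j G x) = L x := by
          conv_rhs => rw [hxs]
          rw [map_sum]
          simp [pd, ← hL, mul_comm]
      _ = c * G x := hkey
  -- second partials of Q·G
  have key : ∀ j : Fin n, pd j (pd j (fun y => Qf p y * G y)) x
      = Qf p x * pd j (pd j G) x + pd j G x * (2 * eps p j * x j)
        + (G x * (2 * eps p j) + 2 * eps p j * x j * pd j G x) := by
    intro j
    have hev : pd j (fun y => Qf p y * G y) =ᶠ[nhds x]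
        (fun y => Qf p y * pd j G y + G y * (2 * eps p j * y j)) := by
      filter_upwards [hOx] with y hy
      rw [pd_mul j (hQd y) (hGd y hy), pd_Qf]
    have hstep : fderiv ℝ (pd j (fun y => Qf p y * G y)) x
        = fderiv ℝ (fun y => Qf p y * pd j G y + G y * (2 * eps p j * y j)) x :=
      hev.fderiv_eq
    have hproj : DifferentiableAt ℝ (fun y : Fin n → ℝ => 2 * eps p j * y j) x :=
      ((hasFDerivAt_apply j x).differentiableAt).const_mul _
    calc pd j (pd j (fun y => Qf p y * G y)) x
        = pd j (fun y => Qf p y * pd j G y + G y * (2 * eps p j * y j)) x := by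
          show fderiv ℝ _ x (Pi.single j 1) = fderiv ℝ _ x (Pi.single j 1)
          rw [hstep]
      _ = pd j (fun y => Qf p y * pd j G y) x
          + pd j (fun y => G y * (2 * eps p j * y j)) x :=
          pd_add j ((hQd x).mul (hpdGd j x hx)) ((hGd x hx).mul hproj)
      _ = Qf p x * pd j (pd j G) x + pd j G x * (2 * eps p j * x j)
          + (G x * (2 * eps p j) + 2 * eps p j * x j * pd j G x) := by
          rw [pd_mul j (hQd x) (hpdGd j x hx), pd_mul j (hGd x hx) hproj,
            pd_Qf, pd_proj]
  simp only [dalembert]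
  calc (∑ j, eps p j * pd j (pd j (fun y => Qf p y * G y)) x)
      = ∑ j, (Qf p x * (eps p j * pd j (pd j G) x)
          + (4 * (x j * pd j G x) + 2 * G x)) := by
        refine Finset.sum_congr rfl fun j _ => ?_
        rw [key j]
        linear_combination (4 * (x j * pd j G x) + 2 * G x) * eps_sq p j
    _ = Qf p x * (∑ j, eps p j * pd j (pd j G) x)
        + (4 * (∑ j, x j * pd j G x) + 2 * (n : ℝ) * G x) := by
        rw [Finset.sum_add_distrib, ← Finset.mul_sum, Finset.sum_add_distrib,
          ← Finset.mul_sum, Finset.sum_const, Finset.card_univ, Fintype.card_fin]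
        push_cast
        ring
    _ = Qf p x * ∑ j, eps p j * pd j (pd j G) x := by
        rw [heuler]; ring
end

section
/- On ℝ^n × ℝ^n with coordinates (x,y) and a nondegenerate symmetric bilinear form Q of signature (p,q), define E₈ = Q(x,y)^{-1} Σ_{j,k} x_j y_k ∂²/(∂x_k ∂y_j) on the open set {Q(x,y) ≠ 0}. Then the commutator [E₈, Q(x)] (where Q(x) acts by multiplication by Q(x,x)) equals 2·Σ_j x_j ∂/∂y_j, i.e. for every smooth f, E₈(Q(x)·f) − Q(x)·E₈(f) = 2 Σ_j x_j ∂f/∂y_j. -/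
open Real Finset

noncomputable def pdx {n : ℕ} (j : Fin n) (f : (Fin n → ℝ) × (Fin n → ℝ) → ℝ) :
    (Fin n → ℝ) × (Fin n → ℝ) → ℝ :=
  fun z => fderiv ℝ f z (Pi.single j 1, 0)

noncomputable def pdy {n : ℕ} (j : Fin n) (f : (Fin n → ℝ) × (Fin n → ℝ) → ℝ) :
    (Fin n → ℝ) × (Fin n → ℝ) → ℝ :=
  fun z => fderiv ℝ f z (0, Pi.single j 1)

/-- The operator `E₈ = Q(x,y)⁻¹ Σ_{j,k} x_j y_k ∂²/(∂x_k ∂y_j)`. -/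
noncomputable def E8 (p : ℕ) {n : ℕ} (f : (Fin n → ℝ) × (Fin n → ℝ) → ℝ) :
    (Fin n → ℝ) × (Fin n → ℝ) → ℝ :=
  fun z => (Qb p z.1 z.2)⁻¹ * ∑ j, ∑ k, z.1 j * z.2 k * pdx k (pdy j f) z

/-- The mixed d'Alembertian `Q(∂_x, ∂_y) = Σ_j ε_j ∂²/(∂x_j ∂y_j)`. -/
noncomputable def boxxy (p : ℕ) {n : ℕ} (f : (Fin n → ℝ) × (Fin n → ℝ) → ℝ) :
    (Fin n → ℝ) × (Fin n → ℝ) → ℝ :=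
  fun z => ∑ j, eps p j * pdx j (pdy j f) z

/-- The d'Alembertian in the `x`-variables. -/
noncomputable def boxx (p : ℕ) {n : ℕ} (f : (Fin n → ℝ) × (Fin n → ℝ) → ℝ) :
    (Fin n → ℝ) × (Fin n → ℝ) → ℝ :=
  fun z => ∑ j, eps p j * pdx j (pdx j f) z

noncomputable def coordL (n : ℕ) (j : Fin n) : ((Fin n → ℝ) × (Fin n → ℝ)) →L[ℝ] ℝ :=
  (ContinuousLinearMap.proj j).comp (ContinuousLinearMap.fst ℝ (Fin n → ℝ) (Fin n → ℝ))

lemma g1_hasFDeriv (p : ℕ) {n : ℕ} (w : (Fin n → ℝ) × (Fin n → ℝ)) :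
    HasFDerivAt (fun w : (Fin n → ℝ) × (Fin n → ℝ) => Qf p w.1)
      (∑ j, eps p j • (w.1 j • coordL n j + w.1 j • coordL n j)) w := by
  have h : ∀ j ∈ Finset.univ, HasFDerivAt
      (fun w : (Fin n → ℝ) × (Fin n → ℝ) => eps p j * (w.1 j * w.1 j))
      (eps p j • (w.1 j • coordL n j + w.1 j • coordL n j)) w := fun j _ =>
    (((coordL n j).hasFDerivAt.mul (coordL n j).hasFDerivAt).const_mul (eps p j))
  have := HasFDerivAt.fun_sum h
  simpa [Qf, Qb, mul_assoc] using this

lemma g1_contDiff (p : ℕ) {n : ℕ} :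
    ContDiff ℝ (⊤ : ℕ∞) (fun w : (Fin n → ℝ) × (Fin n → ℝ) => Qf p w.1) := by
  unfold Qf Qb
  exact ContDiff.sum fun j _ =>
    (contDiff_const.mul ((contDiff_pi.mp contDiff_id j).comp contDiff_fst)).mul
      ((contDiff_pi.mp contDiff_id j).comp contDiff_fst)

lemma fderiv_g1_x (p : ℕ) {n : ℕ} (w : (Fin n → ℝ) × (Fin n → ℝ)) (k : Fin n) :
    fderiv ℝ (fun w : (Fin n → ℝ) × (Fin n → ℝ) => Qf p w.1) w ((Pi.single k 1 : Fin n → ℝ), 0)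
      = 2 * eps p k * w.1 k := by
  rw [(g1_hasFDeriv p w).fderiv]
  simp [coordL, Pi.single_apply]
  rw [Finset.sum_add_distrib]
  simp [Finset.sum_ite_eq']
  ring

lemma fderiv_g1_y (p : ℕ) {n : ℕ} (w : (Fin n → ℝ) × (Fin n → ℝ)) (j : Fin n) :
    fderiv ℝ (fun w : (Fin n → ℝ) × (Fin n → ℝ) => Qf p w.1) w (0, (Pi.single j 1 : Fin n → ℝ))
      = 0 := by
  rw [(g1_hasFDeriv p w).fderiv]
  simp [coordL]

theorem E8_comm_Qx' (p n : ℕ)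
    (f : (Fin n → ℝ) × (Fin n → ℝ) → ℝ)
    (hf : ContDiffOn ℝ (⊤ : ℕ∞) f {z : (Fin n → ℝ) × (Fin n → ℝ) | Qb p z.1 z.2 ≠ 0})
    (z : (Fin n → ℝ) × (Fin n → ℝ)) (hz : Qb p z.1 z.2 ≠ 0) :
    (Qb p z.1 z.2)⁻¹ * (∑ j, ∑ k, z.1 j * z.2 k * pdx k (pdy j (fun w => Qf p w.1 * f w)) z)
      - Qf p z.1 * ((Qb p z.1 z.2)⁻¹ * ∑ j, ∑ k, z.1 j * z.2 k * pdx k (pdy j f) z)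
      = 2 * ∑ j, z.1 j * pdy j f z := by
  set U : Set ((Fin n → ℝ) × (Fin n → ℝ)) := {z | Qb p z.1 z.2 ≠ 0} with hUdef
  have hqcont : Continuous (fun z : (Fin n → ℝ) × (Fin n → ℝ) => Qb p z.1 z.2) := by
    unfold Qb
    exact continuous_finset_sum _ fun j _ =>
      (continuous_const.mul ((continuous_apply j).comp continuous_fst)).mul
        ((continuous_apply j).comp continuous_snd)
  have hU : IsOpen U := isOpen_compl_singleton.preimage hqcont
  have hzU : z ∈ U := hz
  have hca : ∀ w ∈ U, ContDiffAt ℝ (⊤ : ℕ∞) f w := fun w hw => hf.contDiffAt (hU.mem_nhds hw)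
  have hfd : ∀ w ∈ U, DifferentiableAt ℝ f w := fun w hw =>
    (hca w hw).differentiableAt (by simp)
  have hpdy : ∀ (j : Fin n) (w), w ∈ U → DifferentiableAt ℝ (pdy j f) w := by
    intro j w hw
    have h1 : ContDiffAt ℝ (⊤ : ℕ∞) (fderiv ℝ f) w := (hca w hw).fderiv_right (by simp)
    have h2 : ContDiffAt ℝ (⊤ : ℕ∞) (pdy j f) w :=
      (ContinuousLinearMap.apply ℝ ℝ
        ((0 : Fin n → ℝ), (Pi.single j 1 : Fin n → ℝ))).contDiff.contDiffAt.comp w h1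
    exact h2.differentiableAt (by simp)
  have step1 : ∀ (j : Fin n), ∀ w ∈ U,
      pdy j (fun w => Qf p w.1 * f w) w = Qf p w.1 * pdy j f w := by
    intro j w hw
    unfold pdy
    rw [fderiv_fun_mul ((g1_contDiff p).differentiable (by simp) w) (hfd w hw)]
    simp [fderiv_g1_y p w j, pdy]
  have step2 : ∀ (j k : Fin n), pdx k (pdy j (fun w => Qf p w.1 * f w)) z
      = Qf p z.1 * pdx k (pdy j f) z + pdy j f z * (2 * eps p k * z.1 k) := by
    intro j k
    have hev : pdy j (fun w => Qf p w.1 * f w) =ᶠ[nhds z]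
        fun w => Qf p w.1 * pdy j f w :=
      Filter.eventuallyEq_of_mem (hU.mem_nhds hzU) (step1 j)
    unfold pdx
    rw [hev.fderiv_eq]
    rw [fderiv_fun_mul ((g1_contDiff p).differentiable (by simp) z) (hpdy j z hzU)]
    simp [fderiv_g1_x p z k, pdx]
  have hsum : ∑ j, ∑ k, z.1 j * z.2 k * pdx k (pdy j (fun w => Qf p w.1 * f w)) z
      = Qf p z.1 * (∑ j, ∑ k, z.1 j * z.2 k * pdx k (pdy j f) z)
        + 2 * (Qb p z.1 z.2) * ∑ j, z.1 j * pdy j f z := by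
    have e1 : ∀ j k : Fin n,
        z.1 j * z.2 k * (Qf p z.1 * pdx k (pdy j f) z + pdy j f z * (2 * eps p k * z.1 k))
        = Qf p z.1 * (z.1 j * z.2 k * pdx k (pdy j f) z)
          + (2 * (z.1 j * pdy j f z)) * (eps p k * z.1 k * z.2 k) := by
      intro j k; ring
    simp only [step2, e1, Finset.sum_add_distrib, ← Finset.mul_sum]
    rw [show (∑ k, eps p k * z.1 k * z.2 k) = Qb p z.1 z.2 from rfl]
    rw [← Finset.sum_mul, ← Finset.mul_sum]
    ring
  rw [hsum]
  field_simp
  ring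

/-- `[E₈, Q(x)] = 2 Σ_j x_j ∂/∂y_j` on `{Q(x,y) ≠ 0}`. -/
theorem E8_comm_Qx (p q n : ℕ) (hp : 1 ≤ p) (hq : 1 ≤ q) (hn : n = p + q)
    (f : (Fin n → ℝ) × (Fin n → ℝ) → ℝ)
    (hf : ContDiffOn ℝ (⊤ : ℕ∞) f {z : (Fin n → ℝ) × (Fin n → ℝ) | Qb p z.1 z.2 ≠ 0})
    (z : (Fin n → ℝ) × (Fin n → ℝ)) (hz : Qb p z.1 z.2 ≠ 0) :
    E8 p (fun w => Qf p w.1 * f w) z - Qf p z.1 * E8 p f z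
      = 2 * ∑ j, z.1 j * pdy j f z := by
  simp only [E8]
  exact E8_comm_Qx' p n f hf z hz
end
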